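/- Output symmetry of thermal channels: Assume the constraints are strictly feasible. Let {F_ℓ} be a finite family of d_B×d_B matrices with Σ_ℓ F_ℓ†F_ℓ = 1_{d_B} and Σ_ℓ F_ℓF_ℓ† = 1_{d_B} (a unital channel on the output system) satisfying Σ_ℓ (F_ℓ†⊗1_{d_R}) C^j (F_ℓ⊗1_{d_R}) = C^j for all j. For a Choi matrix T set T' := Σ_ℓ (F_ℓ⊗1_{d_R}) T (F_ℓ†⊗1_{d_R}) (the Choi matrix of the composition of the channel of T followed by the channel X ↦ Σ_ℓ F_ℓXF_ℓ†); then T' is again a Choi matrix, and: (i) for any density matrix φ on ℂ^{d_R}, if T maximizes S_φ over feasible Choi matrices, then T' is feasible and also maximizes S_φ over feasible Choi matrices; (ii) if T maximizes the channel entropy S over feasible Choi matrices, then T' is feasible and also maximizes S over feasible Choi matrices. -/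

import Mathlib

/-! Statement 11: Output symmetry of thermal channels. -/

noncomputable section
open scoped Kronecker ComplexOrder
open Matrix

namespace ThermalPaper

/-- Functional calculus for Hermitian matrices (junk value `0` on non-Hermitian input). -/
def hermCFC {n : Type*} [Fintype n] [DecidableEq n] (f : ℝ → ℝ)
    (A : Matrix n n ℂ) : Matrix n n ℂ :=
  if hA : A.IsHermitian then
    (hA.eigenvectorUnitary : Matrix n n ℂ) *
      Matrix.diagonal (fun i => (f (hA.eigenvalues i) : ℂ)) *
      star (hA.eigenvectorUnitary : Matrix n n ℂ)
  else 0

/-- Matrix logarithm of a Hermitian matrix, with the convention `log 0 = 0`. -/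
def matLog {n : Type*} [Fintype n] [DecidableEq n] (A : Matrix n n ℂ) : Matrix n n ℂ :=
  hermCFC Real.log A

/-- Positive semidefinite square root of a positive semidefinite matrix. -/
def matSqrt {n : Type*} [Fintype n] [DecidableEq n] (A : Matrix n n ℂ) : Matrix n n ℂ :=
  hermCFC Real.sqrt A

/-- `X^{-1/2}`: the PSD square root of the Moore–Penrose pseudoinverse of `X`. -/
def matPinvSqrt {n : Type*} [Fintype n] [DecidableEq n] (A : Matrix n n ℂ) : Matrix n n ℂ :=
  hermCFC (fun x => Real.sqrt x⁻¹) A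

/-- `Π^X`: orthogonal projection onto the range (support) of a PSD matrix `X`. -/
def suppProj {n : Type*} [Fintype n] [DecidableEq n] (A : Matrix n n ℂ) : Matrix n n ℂ :=
  hermCFC (fun x => if x = 0 then 0 else 1) A

/-- Von Neumann entropy `S(X) = −tr(X log X)`. -/
def vnEnt {n : Type*} [Fintype n] [DecidableEq n] (A : Matrix n n ℂ) : ℝ :=
  -(Matrix.trace (A * matLog A)).re

/-- A density matrix: positive semidefinite with unit trace. -/
def IsDensity {n : Type*} [Fintype n] [DecidableEq n] (ρ : Matrix n n ℂ) : Prop :=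
  ρ.PosSemidef ∧ Matrix.trace ρ = 1

variable {dB dR : ℕ}

/-- Partial trace over the `B` factor. -/
def ptraceB (N : Matrix (Fin dB × Fin dR) (Fin dB × Fin dR) ℂ) :
    Matrix (Fin dR) (Fin dR) ℂ :=
  Matrix.of fun r r' => ∑ b : Fin dB, N (b, r) (b, r')

/-- A Choi matrix: positive semidefinite with `tr_B N = 1`. -/
def IsChoi (N : Matrix (Fin dB × Fin dR) (Fin dB × Fin dR) ℂ) : Prop :=
  N.PosSemidef ∧ ptraceB N = 1

/-- Channel conditional entropy `S_ρ(N)` with respect to the input state `ρ`. -/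
def condEnt (ρ : Matrix (Fin dR) (Fin dR) ℂ)
    (N : Matrix (Fin dB × Fin dR) (Fin dB × Fin dR) ℂ) : ℝ :=
  vnEnt (((1 : Matrix (Fin dB) (Fin dB) ℂ) ⊗ₖ matSqrt ρ) * N *
    ((1 : Matrix (Fin dB) (Fin dB) ℂ) ⊗ₖ matSqrt ρ)) - vnEnt ρ

/-- Channel entropy: the infimum of `S_ρ(N)` over density matrices `ρ`. -/
def chanEnt (N : Matrix (Fin dB × Fin dR) (Fin dB × Fin dR) ℂ) : ℝ :=
  sInf {x : ℝ | ∃ ρ : Matrix (Fin dR) (Fin dR) ℂ, IsDensity ρ ∧ condEnt ρ N = x}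

/-! ### Auxiliary lemmas -/

section Aux

variable {n : Type*} [Fintype n] [DecidableEq n]

lemma hermCFC_eq (f : ℝ → ℝ) {A : Matrix n n ℂ} (hA : A.IsHermitian) :
    hermCFC f A = (hA.eigenvectorUnitary : Matrix n n ℂ) *
      Matrix.diagonal (fun i => (f (hA.eigenvalues i) : ℂ)) *
      star (hA.eigenvectorUnitary : Matrix n n ℂ) := by
  rw [hermCFC, dif_pos hA]

lemma hermCFC_isHermitian (f : ℝ → ℝ) (A : Matrix n n ℂ) : (hermCFC f A).IsHermitian := by
  rw [hermCFC]
  split_ifs with h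
  · have hd : (Matrix.diagonal (fun i => (f (h.eigenvalues i) : ℂ))).IsHermitian :=
      Matrix.isHermitian_diagonal_iff.mpr fun i => by
        simp [_root_.IsSelfAdjoint, Complex.conj_ofReal]
    rw [Matrix.star_eq_conjTranspose]
    exact Matrix.isHermitian_mul_mul_conjTranspose _ hd
  · exact Matrix.isHermitian_zero

/-- Helper for multiplying two spectral decompositions w.r.t. the same unitary. -/
private lemma conj_mul_conj {U D E : Matrix n n ℂ} (hU : star U * U = 1) :
    (U * D * star U) * (U * E * star U) = U * (D * E) * star U := by
  have h : star U * (U * (E * star U)) = E * star U := by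
    rw [← Matrix.mul_assoc, hU, Matrix.one_mul]
  simp only [Matrix.mul_assoc, h]

lemma matSqrt_mul_self {A : Matrix n n ℂ} (hA : A.PosSemidef) :
    matSqrt A * matSqrt A = A := by
  have h := hA.1
  have hU : star (h.eigenvectorUnitary : Matrix n n ℂ) * (h.eigenvectorUnitary : Matrix n n ℂ)
      = 1 := Matrix.mem_unitaryGroup_iff'.mp h.eigenvectorUnitary.2
  rw [matSqrt, hermCFC_eq _ h, conj_mul_conj hU, Matrix.diagonal_mul_diagonal]
  have : (fun i => (Real.sqrt (h.eigenvalues i) : ℂ) * (Real.sqrt (h.eigenvalues i) : ℂ))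
      = RCLike.ofReal ∘ h.eigenvalues := by
    funext i
    rw [← Complex.ofReal_mul, Real.mul_self_sqrt (hA.eigenvalues_nonneg i)]
    rfl
  rw [this]
  have hs := h.spectral_theorem
  simp only [Unitary.conjStarAlgAut_apply, Unitary.coe_star] at hs
  exact hs.symm

lemma trace_eq_sum_eigenvalues {A : Matrix n n ℂ} (hA : A.IsHermitian) :
    A.trace = ∑ i, (hA.eigenvalues i : ℂ) := by
  have hU : star (hA.eigenvectorUnitary : Matrix n n ℂ) * (hA.eigenvectorUnitary : Matrix n n ℂ)
      = 1 := Matrix.mem_unitaryGroup_iff'.mp hA.eigenvectorUnitary.2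
  conv_lhs => rw [hA.spectral_theorem, Unitary.conjStarAlgAut_apply]
  rw [Matrix.trace_mul_cycle, hU, Matrix.one_mul, Matrix.trace_diagonal]
  rfl

lemma vnEnt_eq_sum {A : Matrix n n ℂ} (hA : A.PosSemidef) :
    vnEnt A = ∑ i, Real.negMulLog (hA.1.eigenvalues i) := by
  have h := hA.1
  have hU : star (h.eigenvectorUnitary : Matrix n n ℂ) * (h.eigenvectorUnitary : Matrix n n ℂ)
      = 1 := Matrix.mem_unitaryGroup_iff'.mp h.eigenvectorUnitary.2
  have key : A * matLog A = (h.eigenvectorUnitary : Matrix n n ℂ) *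
      Matrix.diagonal (fun i => ((hA.1.eigenvalues i : ℂ) * (Real.log (hA.1.eigenvalues i) : ℂ))) *
      star (h.eigenvectorUnitary : Matrix n n ℂ) := by
    rw [matLog, hermCFC_eq _ h]
    have hrw : A * ((h.eigenvectorUnitary : Matrix n n ℂ) *
        Matrix.diagonal (fun i => (Real.log (h.eigenvalues i) : ℂ)) *
        star (h.eigenvectorUnitary : Matrix n n ℂ))
        = ((h.eigenvectorUnitary : Matrix n n ℂ) *
          Matrix.diagonal (RCLike.ofReal ∘ h.eigenvalues) *
          star (h.eigenvectorUnitary : Matrix n n ℂ)) *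
        ((h.eigenvectorUnitary : Matrix n n ℂ) *
          Matrix.diagonal (fun i => (Real.log (h.eigenvalues i) : ℂ)) *
          star (h.eigenvectorUnitary : Matrix n n ℂ)) := by
      have hs := h.spectral_theorem
      simp only [Unitary.conjStarAlgAut_apply, Unitary.coe_star] at hs
      exact congrArg (· * _) hs
    rw [hrw, conj_mul_conj hU, Matrix.diagonal_mul_diagonal]
    rfl
  rw [vnEnt, key, Matrix.trace_mul_cycle, hU, Matrix.one_mul,
    Matrix.trace_diagonal]
  push_cast
  rw [Complex.re_sum]
  rw [← Finset.sum_neg_distrib]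
  refine Finset.sum_congr rfl fun i _ => ?_
  simp only [Real.negMulLog, neg_mul, ← Complex.ofReal_mul, Complex.ofReal_re]

lemma posSemidef_sum {ι : Type*} (s : Finset ι) (f : ι → Matrix n n ℂ)
    (h : ∀ i ∈ s, (f i).PosSemidef) : (∑ i ∈ s, f i).PosSemidef := by
  classical
  induction s using Finset.induction_on with
  | empty =>
    rw [Finset.sum_empty]
    exact ⟨Matrix.isHermitian_zero, fun x => by simp⟩
  | insert _ _ hnotmem ih =>
    rw [Finset.sum_insert hnotmem]
    exact ((h _ (Finset.mem_insert_self _ _)).add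
      (ih fun i hi => h i (Finset.mem_insert_of_mem hi)))

lemma negMulLog_le_one {x : ℝ} (hx : 0 ≤ x) : Real.negMulLog x ≤ 1 := by
  rcases eq_or_lt_of_le hx with h | h
  · simp [← h]
  · have hlog : Real.log x⁻¹ ≤ x⁻¹ - 1 := Real.log_le_sub_one_of_pos (inv_pos.mpr h)
    calc Real.negMulLog x = x * Real.log x⁻¹ := by
          rw [Real.negMulLog, Real.log_inv]; ring
      _ ≤ x * (x⁻¹ - 1) := mul_le_mul_of_nonneg_left hlog h.le
      _ = 1 - x := by rw [mul_sub, mul_inv_cancel₀ h.ne']; ring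
      _ ≤ 1 := by linarith
  
lemma vnEnt_nonneg {A : Matrix n n ℂ} (hA : A.PosSemidef) (htr : A.trace = 1) :
    0 ≤ vnEnt A := by
  have hsum : ∑ i, hA.1.eigenvalues i = 1 := by
    have h := trace_eq_sum_eigenvalues hA.1
    rw [htr] at h
    exact_mod_cast (by exact_mod_cast h.symm : ((∑ i, hA.1.eigenvalues i : ℝ) : ℂ) = 1)
  rw [vnEnt_eq_sum hA]
  refine Finset.sum_nonneg fun i _ => Real.negMulLog_nonneg (hA.eigenvalues_nonneg i) ?_
  calc hA.1.eigenvalues i ≤ ∑ j, hA.1.eigenvalues j :=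
        Finset.single_le_sum (fun j _ => hA.eigenvalues_nonneg j) (Finset.mem_univ i)
    _ = 1 := hsum

lemma vnEnt_le_card {A : Matrix n n ℂ} (hA : A.PosSemidef) :
    vnEnt A ≤ Fintype.card n := by
  rw [vnEnt_eq_sum hA]
  calc ∑ i, Real.negMulLog (hA.1.eigenvalues i) ≤ ∑ _i : n, (1 : ℝ) :=
        Finset.sum_le_sum fun i _ => negMulLog_le_one (hA.eigenvalues_nonneg i)
    _ = Fintype.card n := by simp

set_option maxHeartbeats 2000000 in
/-- **Key lemma: von Neumann entropy does not decrease under a unital channel.** -/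
lemma vnEnt_le_unital {ι : Type*} [Fintype ι] {X : Matrix n n ℂ} (hX : X.PosSemidef)
    (G : ι → Matrix n n ℂ) (h1 : ∑ l : ι, (G l)ᴴ * G l = 1) (h2 : ∑ l : ι, G l * (G l)ᴴ = 1) :
    vnEnt X ≤ vnEnt (∑ l : ι, G l * X * (G l)ᴴ) := by
  classical
  set Y := ∑ l : ι, G l * X * (G l)ᴴ with hYdef
  have hY : Y.PosSemidef :=
    posSemidef_sum _ _ fun l _ => hX.mul_mul_conjTranspose_same (G l)
  set Ux : Matrix n n ℂ := (hX.1.eigenvectorUnitary : Matrix n n ℂ) with hUxdef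
  set Uy : Matrix n n ℂ := (hY.1.eigenvectorUnitary : Matrix n n ℂ) with hUydef
  have hUx : star Ux * Ux = 1 := Matrix.mem_unitaryGroup_iff'.mp hX.1.eigenvectorUnitary.2
  have hUx' : Ux * star Ux = 1 := Matrix.mem_unitaryGroup_iff.mp hX.1.eigenvectorUnitary.2
  have hUy : star Uy * Uy = 1 := Matrix.mem_unitaryGroup_iff'.mp hY.1.eigenvectorUnitary.2
  have hUy' : Uy * star Uy = 1 := Matrix.mem_unitaryGroup_iff.mp hY.1.eigenvectorUnitary.2
  set lam := hX.1.eigenvalues with hlamdef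
  set mu := hY.1.eigenvalues with hmudef
  set M : ι → Matrix n n ℂ := fun l => star Uy * G l * Ux with hMdef
  set D : n → n → ℝ := fun j i => ∑ l : ι, Complex.normSq (M l j i) with hDdef
  have hDnn : ∀ j i, 0 ≤ D j i :=
    fun j i => Finset.sum_nonneg fun l _ => Complex.normSq_nonneg _
  have hMconj : ∀ l, (M l)ᴴ = star Ux * (G l)ᴴ * Uy := by
    intro l
    simp only [hMdef, Matrix.star_eq_conjTranspose, Matrix.conjTranspose_mul,
      Matrix.conjTranspose_conjTranspose, Matrix.mul_assoc]
  -- row sums of D are 1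
  have hrow : ∀ j, ∑ i, D j i = 1 := by
    intro j
    have hmm : ∑ l : ι, M l * (M l)ᴴ = 1 := by
      have e : ∀ l, M l * (M l)ᴴ = star Uy * (G l * (G l)ᴴ) * Uy := by
        intro l
        rw [hMconj l, hMdef]
        simp only [Matrix.mul_assoc]
        rw [← Matrix.mul_assoc Ux (star Ux), hUx', Matrix.one_mul]
      rw [Finset.sum_congr rfl fun l _ => e l, ← Finset.sum_mul, ← Finset.mul_sum, h2,
        Matrix.mul_one]
      exact hUy
    have e1 := congrFun (congrFun (congrArg (fun (A : Matrix n n ℂ) => (A : Matrix n n ℂ)) hmm) j) j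
    simp only [Matrix.sum_apply, Matrix.mul_apply, Matrix.conjTranspose_apply,
      Matrix.one_apply_eq] at e1
    have e2 : ∀ l i, M l j i * star (M l j i) = ((Complex.normSq (M l j i) : ℝ) : ℂ) := by
      intro l i
      rw [Complex.star_def, Complex.mul_conj]
    simp only [e2] at e1
    have e3 : ((∑ i, D j i : ℝ) : ℂ) = 1 := by
      push_cast
      rw [Finset.sum_comm] at e1
      simpa [hDdef] using e1
    exact_mod_cast e3
  -- column sums of D are 1
  have hcol : ∀ i, ∑ j, D j i = 1 := by
    intro i
    have hmm : ∑ l : ι, (M l)ᴴ * M l = 1 := by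
      have e : ∀ l, (M l)ᴴ * M l = star Ux * ((G l)ᴴ * G l) * Ux := by
        intro l
        rw [hMconj l, hMdef]
        simp only [Matrix.mul_assoc]
        rw [← Matrix.mul_assoc Uy (star Uy), hUy', Matrix.one_mul]
      rw [Finset.sum_congr rfl fun l _ => e l, ← Finset.sum_mul, ← Finset.mul_sum, h1,
        Matrix.mul_one]
      exact hUx
    have e1 := congrFun (congrFun (congrArg (fun (A : Matrix n n ℂ) => (A : Matrix n n ℂ)) hmm) i) i
    simp only [Matrix.sum_apply, Matrix.mul_apply, Matrix.conjTranspose_apply,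
      Matrix.one_apply_eq] at e1
    have e2 : ∀ l j, star (M l j i) * M l j i = ((Complex.normSq (M l j i) : ℝ) : ℂ) := by
      intro l j
      rw [Complex.star_def, mul_comm, Complex.mul_conj]
    simp only [e2] at e1
    have e3 : ((∑ j, D j i : ℝ) : ℂ) = 1 := by
      push_cast
      rw [Finset.sum_comm] at e1
      simpa [hDdef] using e1
    exact_mod_cast e3
  -- eigenvalues of Y are mixtures of eigenvalues of X
  have hmu : ∀ j, mu j = ∑ i, D j i * lam i := by
    intro j
    have hdiag : Matrix.diagonal (RCLike.ofReal ∘ mu) = star Uy * Y * Uy :=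
      by
        have hs := hY.1.conjStarAlgAut_star_eigenvectorUnitary
        simp only [Unitary.conjStarAlgAut_apply, Unitary.coe_star, star_star] at hs
        exact hs.symm
    have hsand : star Uy * Y * Uy = ∑ l : ι,
        M l * Matrix.diagonal (RCLike.ofReal ∘ lam) * (M l)ᴴ := by
      rw [hYdef, Finset.mul_sum, Finset.sum_mul]
      refine Finset.sum_congr rfl fun l _ => ?_
      rw [hMconj l, hMdef]
      conv_lhs => rw [hX.1.spectral_theorem, Unitary.conjStarAlgAut_apply]
      simp only [Matrix.mul_assoc, hUxdef, hlamdef]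
    have e1 := congrFun (congrFun (congrArg (fun (A : Matrix n n ℂ) => (A : Matrix n n ℂ))
      (hdiag.trans hsand)) j) j
    simp only [Matrix.diagonal_apply_eq, Function.comp_apply, Matrix.sum_apply,
      Matrix.mul_apply, Matrix.mul_diagonal, Matrix.conjTranspose_apply,
      Complex.star_def, show (RCLike.ofReal : ℝ → ℂ) = Complex.ofReal from rfl] at e1
    have e2 : ∀ (l : ι) (i : n), M l j i * ((lam i : ℝ) : ℂ) * (starRingEnd ℂ) (M l j i)
        = ((Complex.normSq (M l j i) * lam i : ℝ) : ℂ) := by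
      intro l i
      rw [Complex.ofReal_mul, ← Complex.mul_conj]
      ring
    simp only [Matrix.diagonal_apply, Function.comp_apply, mul_ite, mul_zero, ite_mul,
      zero_mul, Finset.sum_ite_eq, Finset.sum_ite_eq', Finset.mem_univ, if_true] at e1
    simp only [e2] at e1
    have e3 : ((mu j : ℝ) : ℂ) = ((∑ i, D j i * lam i : ℝ) : ℂ) := by
      push_cast
      push_cast at e1
      simp only [hDdef]
      push_cast
      rw [e1]
      simp only [Finset.sum_mul]
      exact Finset.sum_comm
    exact_mod_cast e3
  -- Jensen's inequality
  have jens : ∀ j, ∑ i, D j i * Real.negMulLog (lam i) ≤ Real.negMulLog (mu j) := by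
    intro j
    have := Real.concaveOn_negMulLog.le_map_sum (t := Finset.univ) (w := D j) (p := lam)
      (fun i _ => hDnn j i) (hrow j) (fun i _ => hX.eigenvalues_nonneg i)
    rw [hmu j]
    simpa [smul_eq_mul] using this
  rw [vnEnt_eq_sum hX, vnEnt_eq_sum hY]
  calc ∑ i, Real.negMulLog (lam i) = ∑ i, (∑ j, D j i) * Real.negMulLog (lam i) := by
        refine Finset.sum_congr rfl fun i _ => ?_
        rw [hcol i, one_mul]
    _ = ∑ j, ∑ i, D j i * Real.negMulLog (lam i) := by
        rw [Finset.sum_comm]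
        exact Finset.sum_congr rfl fun i _ => Finset.sum_mul _ _ _
    _ ≤ ∑ j, Real.negMulLog (mu j) := Finset.sum_le_sum fun j _ => jens j

lemma kron_conjTranspose {m p : Type*} [Fintype m] [Fintype p]
    (A : Matrix m m ℂ) (B : Matrix p p ℂ) : (A ⊗ₖ B)ᴴ = Aᴴ ⊗ₖ Bᴴ := by
  ext ⟨i, j⟩ ⟨k, l⟩
  simp [Matrix.conjTranspose_apply, Matrix.kroneckerMap_apply, mul_comm]

lemma sum_kron {ι m p : Type*} [Fintype ι] [Fintype m] [Fintype p]
    (A : ι → Matrix m m ℂ) (B : Matrix p p ℂ) :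
    (∑ l : ι, A l) ⊗ₖ B = ∑ l : ι, A l ⊗ₖ B := by
  ext ⟨i, j⟩ ⟨k, l⟩
  simp [Matrix.kroneckerMap_apply, Matrix.sum_apply, Finset.sum_mul]

end Aux

section AuxBR

variable {dB dR : ℕ}

lemma ptraceB_sum {ι : Type*} [Fintype ι]
    (f : ι → Matrix (Fin dB × Fin dR) (Fin dB × Fin dR) ℂ) :
    ptraceB (∑ l : ι, f l) = ∑ l : ι, ptraceB (f l) := by
  ext r r'
  simp only [ptraceB, Matrix.sum_apply, Matrix.of_apply]
  rw [Finset.sum_comm]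

set_option maxRecDepth 10000 in
lemma ptraceB_kron_one_mul_comm (A : Matrix (Fin dB) (Fin dB) ℂ)
    (M : Matrix (Fin dB × Fin dR) (Fin dB × Fin dR) ℂ) :
    ptraceB ((A ⊗ₖ (1 : Matrix (Fin dR) (Fin dR) ℂ)) * M)
      = ptraceB (M * (A ⊗ₖ (1 : Matrix (Fin dR) (Fin dR) ℂ))) := by
  ext r r'
  simp only [ptraceB, Matrix.of_apply, Matrix.mul_apply, Fintype.sum_prod_type,
    Matrix.kroneckerMap_apply, Matrix.one_apply]
  have lhs_eq : ∀ b : Fin dB,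
      (∑ b1 : Fin dB, ∑ r1 : Fin dR,
        (A b b1 * if r = r1 then 1 else 0) * M (b1, r1) (b, r'))
      = ∑ b1 : Fin dB, A b b1 * M (b1, r) (b, r') := by
    intro b
    refine Finset.sum_congr rfl fun b1 _ => ?_
    rw [Finset.sum_eq_single r]
    · simp
    · intro r1 _ hne
      simp [Ne.symm hne]
    · intro h; exact absurd (Finset.mem_univ r) h
  have rhs_eq : ∀ b : Fin dB,
      (∑ b2 : Fin dB, ∑ r2 : Fin dR,
        M (b, r) (b2, r2) * (A b2 b * if r2 = r' then 1 else 0))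
      = ∑ b2 : Fin dB, M (b, r) (b2, r') * A b2 b := by
    intro b
    refine Finset.sum_congr rfl fun b2 _ => ?_
    rw [Finset.sum_eq_single r']
    · simp
    · intro r2 _ hne
      simp [hne]
    · intro h; exact absurd (Finset.mem_univ r') h
  calc (∑ b : Fin dB, ∑ b1 : Fin dB, ∑ r1 : Fin dR,
        (A b b1 * if r = r1 then 1 else 0) * M (b1, r1) (b, r'))
      = ∑ b : Fin dB, ∑ b1 : Fin dB, A b b1 * M (b1, r) (b, r') :=
        Finset.sum_congr rfl fun b _ => lhs_eq b
    _ = ∑ b1 : Fin dB, ∑ b : Fin dB, M (b1, r) (b, r') * A b b1 := by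
        rw [Finset.sum_comm]
        exact Finset.sum_congr rfl fun b1 _ => Finset.sum_congr rfl fun b _ => mul_comm _ _
    _ = ∑ b : Fin dB, ∑ b2 : Fin dB, ∑ r2 : Fin dR,
        M (b, r) (b2, r2) * (A b2 b * if r2 = r' then 1 else 0) :=
        (Finset.sum_congr rfl fun b _ => (rhs_eq b)).symm

lemma trace_one_kron_mul (ρ : Matrix (Fin dR) (Fin dR) ℂ)
    (N : Matrix (Fin dB × Fin dR) (Fin dB × Fin dR) ℂ) :
    Matrix.trace (((1 : Matrix (Fin dB) (Fin dB) ℂ) ⊗ₖ ρ) * N)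
      = Matrix.trace (ρ * ptraceB N) := by
  simp only [Matrix.trace, Matrix.diag_apply, Matrix.mul_apply, Matrix.kroneckerMap_apply,
    Matrix.one_apply, ptraceB, Matrix.of_apply, Fintype.sum_prod_type]
  -- LHS: ∑ b ∑ r ∑ b1 ∑ r1, (if b = b1 then 1 else 0) * ρ r r1 * N (b1,r1) (b,r)
  have lhs_eq : ∀ (b : Fin dB) (r : Fin dR),
      (∑ b1 : Fin dB, ∑ r1 : Fin dR,
        ((if b = b1 then 1 else 0) * ρ r r1) * N (b1, r1) (b, r))
      = ∑ r1 : Fin dR, ρ r r1 * N (b, r1) (b, r) := by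
    intro b r
    rw [Finset.sum_eq_single b]
    · simp
    · intro b1 _ hne
      simp [Ne.symm hne]
    · intro h; exact absurd (Finset.mem_univ b) h
  calc (∑ b : Fin dB, ∑ r : Fin dR, ∑ b1 : Fin dB, ∑ r1 : Fin dR,
        ((if b = b1 then 1 else 0) * ρ r r1) * N (b1, r1) (b, r))
      = ∑ b : Fin dB, ∑ r : Fin dR, ∑ r1 : Fin dR, ρ r r1 * N (b, r1) (b, r) :=
        Finset.sum_congr rfl fun b _ => Finset.sum_congr rfl fun r _ => lhs_eq b r
    _ = ∑ r : Fin dR, ∑ r1 : Fin dR, ρ r r1 * ∑ b : Fin dB, N (b, r1) (b, r) := by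
        rw [Finset.sum_comm]
        refine Finset.sum_congr rfl fun r _ => ?_
        rw [Finset.sum_comm]
        exact Finset.sum_congr rfl fun r1 _ => (Finset.mul_sum _ _ _).symm

end AuxBR

/-- **Constraints symmetric on the output system: thermal channels are preserved by the
covariant unital channel on the output.** -/
theorem thermal_channel_output_symmetry
    {dB dR J : ℕ} (hdB : 1 ≤ dB) (hdR : 1 ≤ dR)
    (C : Fin J → Matrix (Fin dB × Fin dR) (Fin dB × Fin dR) ℂ)
    (hC : ∀ j, (C j).IsHermitian) (q : Fin J → ℝ)
    (hstrict : ∃ N : Matrix (Fin dB × Fin dR) (Fin dB × Fin dR) ℂ,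
      IsChoi N ∧ N.PosDef ∧ ∀ j, Matrix.trace (C j * N) = (q j : ℂ))
    -- a unital channel on the output system, leaving all constraint operators invariant
    {ι : Type} [Fintype ι] (F : ι → Matrix (Fin dB) (Fin dB) ℂ)
    (hFtp : ∑ l : ι, (F l)ᴴ * F l = 1)
    (hFunital : ∑ l : ι, F l * (F l)ᴴ = 1)
    (hFcov : ∀ j, ∑ l : ι,
      ((F l)ᴴ ⊗ₖ (1 : Matrix (Fin dR) (Fin dR) ℂ)) * C j *
        (F l ⊗ₖ (1 : Matrix (Fin dR) (Fin dR) ℂ)) = C j)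
    (T : Matrix (Fin dB × Fin dR) (Fin dB × Fin dR) ℂ)
    (T' : Matrix (Fin dB × Fin dR) (Fin dB × Fin dR) ℂ)
    (hT' : T' = ∑ l : ι,
      (F l ⊗ₖ (1 : Matrix (Fin dR) (Fin dR) ℂ)) * T *
        ((F l)ᴴ ⊗ₖ (1 : Matrix (Fin dR) (Fin dR) ℂ))) :
    -- `T'` is again a Choi matrix
    (IsChoi T → IsChoi T')
    ∧
    -- (i) if `T` is a thermal channel with respect to `φ`, then so is `T'`
    (∀ φ : Matrix (Fin dR) (Fin dR) ℂ, IsDensity φ →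
      IsChoi T → (∀ j, Matrix.trace (C j * T) = (q j : ℂ)) →
      (∀ N : Matrix (Fin dB × Fin dR) (Fin dB × Fin dR) ℂ,
        IsChoi N → (∀ j, Matrix.trace (C j * N) = (q j : ℂ)) →
          condEnt φ N ≤ condEnt φ T) →
      ((∀ j, Matrix.trace (C j * T') = (q j : ℂ)) ∧
        ∀ N : Matrix (Fin dB × Fin dR) (Fin dB × Fin dR) ℂ,
          IsChoi N → (∀ j, Matrix.trace (C j * N) = (q j : ℂ)) →
            condEnt φ N ≤ condEnt φ T'))
    ∧
    -- (ii) if `T` is a thermal channel, then so is `T'`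
    (IsChoi T → (∀ j, Matrix.trace (C j * T) = (q j : ℂ)) →
      (∀ N : Matrix (Fin dB × Fin dR) (Fin dB × Fin dR) ℂ,
        IsChoi N → (∀ j, Matrix.trace (C j * N) = (q j : ℂ)) →
          chanEnt N ≤ chanEnt T) →
      ((∀ j, Matrix.trace (C j * T') = (q j : ℂ)) ∧
        ∀ N : Matrix (Fin dB × Fin dR) (Fin dB × Fin dR) ℂ,
          IsChoi N → (∀ j, Matrix.trace (C j * N) = (q j : ℂ)) →
            chanEnt N ≤ chanEnt T')) := by
  classical
  set G : ι → Matrix (Fin dB × Fin dR) (Fin dB × Fin dR) ℂ :=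
    fun l => F l ⊗ₖ (1 : Matrix (Fin dR) (Fin dR) ℂ) with hGdef
  have hGconj : ∀ l, (G l)ᴴ = (F l)ᴴ ⊗ₖ (1 : Matrix (Fin dR) (Fin dR) ℂ) := fun l => by
    rw [hGdef, kron_conjTranspose, Matrix.conjTranspose_one]
  have hG1 : ∑ l : ι, (G l)ᴴ * G l = 1 := by
    calc ∑ l : ι, (G l)ᴴ * G l
        = ∑ l : ι, ((F l)ᴴ * F l) ⊗ₖ ((1 : Matrix (Fin dR) (Fin dR) ℂ) * 1) := by
          refine Finset.sum_congr rfl fun l _ => ?_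
          rw [hGconj, hGdef, Matrix.mul_kronecker_mul]
      _ = (∑ l : ι, (F l)ᴴ * F l) ⊗ₖ (1 : Matrix (Fin dR) (Fin dR) ℂ) := by
          rw [Matrix.one_mul]; exact (sum_kron _ _).symm
      _ = 1 := by rw [hFtp, Matrix.one_kronecker_one]
  have hG2 : ∑ l : ι, G l * (G l)ᴴ = 1 := by
    calc ∑ l : ι, G l * (G l)ᴴ
        = ∑ l : ι, (F l * (F l)ᴴ) ⊗ₖ ((1 : Matrix (Fin dR) (Fin dR) ℂ) * 1) := by
          refine Finset.sum_congr rfl fun l _ => ?_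
          rw [hGconj, hGdef, Matrix.mul_kronecker_mul]
      _ = (∑ l : ι, F l * (F l)ᴴ) ⊗ₖ (1 : Matrix (Fin dR) (Fin dR) ℂ) := by
          rw [Matrix.one_mul]; exact (sum_kron _ _).symm
      _ = 1 := by rw [hFunital, Matrix.one_kronecker_one]
  have hT'G : T' = ∑ l : ι, G l * T * (G l)ᴴ := by
    rw [hT']
    exact Finset.sum_congr rfl fun l _ => by rw [hGconj, hGdef]
  -- `T'` is a Choi matrix
  have hchoi : IsChoi T → IsChoi T' := by
    intro hT
    constructor
    · rw [hT'G]
      exact posSemidef_sum _ _ fun l _ => hT.1.mul_mul_conjTranspose_same _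
    · rw [hT', ptraceB_sum]
      have key : ∀ l : ι, ptraceB ((F l ⊗ₖ (1 : Matrix (Fin dR) (Fin dR) ℂ)) * T *
          ((F l)ᴴ ⊗ₖ (1 : Matrix (Fin dR) (Fin dR) ℂ)))
          = ptraceB (T * (((F l)ᴴ * F l) ⊗ₖ (1 : Matrix (Fin dR) (Fin dR) ℂ))) := by
        intro l
        rw [Matrix.mul_assoc, ptraceB_kron_one_mul_comm, Matrix.mul_assoc]
        simp only [← Matrix.mul_kronecker_mul, Matrix.one_mul]
      rw [Finset.sum_congr rfl fun l _ => key l, ← ptraceB_sum, ← Finset.mul_sum,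
        ← sum_kron, hFtp, Matrix.one_kronecker_one, Matrix.mul_one, hT.2]
  -- feasibility is preserved
  have hfeas : (∀ j, Matrix.trace (C j * T) = (q j : ℂ)) →
      ∀ j, Matrix.trace (C j * T') = (q j : ℂ) := by
    intro hfT j
    rw [hT', Finset.mul_sum, Matrix.trace_sum]
    have key : ∀ l : ι, Matrix.trace (C j * ((F l ⊗ₖ (1 : Matrix (Fin dR) (Fin dR) ℂ)) * T *
        ((F l)ᴴ ⊗ₖ (1 : Matrix (Fin dR) (Fin dR) ℂ))))
        = Matrix.trace ((((F l)ᴴ ⊗ₖ (1 : Matrix (Fin dR) (Fin dR) ℂ)) * C j *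
          (F l ⊗ₖ (1 : Matrix (Fin dR) (Fin dR) ℂ))) * T) := by
      intro l
      rw [show C j * ((F l ⊗ₖ (1 : Matrix (Fin dR) (Fin dR) ℂ)) * T *
          ((F l)ᴴ ⊗ₖ (1 : Matrix (Fin dR) (Fin dR) ℂ)))
          = (C j * (F l ⊗ₖ (1 : Matrix (Fin dR) (Fin dR) ℂ)) * T) *
          ((F l)ᴴ ⊗ₖ (1 : Matrix (Fin dR) (Fin dR) ℂ)) by simp only [Matrix.mul_assoc],
        Matrix.trace_mul_comm]
      simp only [Matrix.mul_assoc]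
    rw [Finset.sum_congr rfl fun l _ => key l, ← Matrix.trace_sum, ← Finset.sum_mul,
      hFcov j, hfT j]
  -- Hermiticity of `1 ⊗ √ρ`
  have hB : ∀ ρ : Matrix (Fin dR) (Fin dR) ℂ,
      ((1 : Matrix (Fin dB) (Fin dB) ℂ) ⊗ₖ matSqrt ρ)ᴴ
      = (1 : Matrix (Fin dB) (Fin dB) ℂ) ⊗ₖ matSqrt ρ := by
    intro ρ
    have hs : (matSqrt ρ).IsHermitian := hermCFC_isHermitian Real.sqrt ρ
    rw [kron_conjTranspose, Matrix.conjTranspose_one, hs.eq]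
  -- entropy monotonicity
  have hent : ∀ ρ : Matrix (Fin dR) (Fin dR) ℂ, IsDensity ρ → IsChoi T →
      condEnt ρ T ≤ condEnt ρ T' := by
    intro ρ hρ hT
    set S : Matrix (Fin dB × Fin dR) (Fin dB × Fin dR) ℂ :=
      (1 : Matrix (Fin dB) (Fin dB) ℂ) ⊗ₖ matSqrt ρ with hSdef
    have hX : (S * T * S).PosSemidef := by
      have h0 := hT.1.mul_mul_conjTranspose_same S
      rw [hB ρ] at h0
      exact h0
    have hcomm : ∀ l : ι, S * G l = G l * S := by
      intro l
      simp only [hSdef, hGdef, ← Matrix.mul_kronecker_mul, Matrix.one_mul, Matrix.mul_one]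
    have hcomm' : ∀ l : ι, S * (G l)ᴴ = (G l)ᴴ * S := by
      intro l
      rw [hGconj]
      simp only [hSdef, ← Matrix.mul_kronecker_mul, Matrix.one_mul, Matrix.mul_one]
    have hY : S * T' * S = ∑ l : ι, G l * (S * T * S) * (G l)ᴴ := by
      rw [hT'G, Finset.mul_sum, Finset.sum_mul]
      refine Finset.sum_congr rfl fun l _ => ?_
      calc S * (G l * T * (G l)ᴴ) * S
          = (S * G l) * (T * ((G l)ᴴ * S)) := by simp only [Matrix.mul_assoc]
        _ = (G l * S) * (T * (S * (G l)ᴴ)) := by rw [hcomm, hcomm']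
        _ = G l * (S * T * S) * (G l)ᴴ := by simp only [Matrix.mul_assoc]
    have hle := vnEnt_le_unital hX G hG1 hG2
    rw [← hY] at hle
    have : condEnt ρ T = vnEnt (S * T * S) - vnEnt ρ := rfl
    rw [this, show condEnt ρ T' = vnEnt (S * T' * S) - vnEnt ρ from rfl]
    exact sub_le_sub_right hle _
  -- uniform lower bound on conditional entropies of a Choi matrix
  have hbdd : ∀ N : Matrix (Fin dB × Fin dR) (Fin dB × Fin dR) ℂ, IsChoi N →
      ∀ ρ : Matrix (Fin dR) (Fin dR) ℂ, IsDensity ρ → -(dR : ℝ) ≤ condEnt ρ N := by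
    intro N hN ρ hρ
    set S : Matrix (Fin dB × Fin dR) (Fin dB × Fin dR) ℂ :=
      (1 : Matrix (Fin dB) (Fin dB) ℂ) ⊗ₖ matSqrt ρ with hSdef
    have hX : (S * N * S).PosSemidef := by
      have h0 := hN.1.mul_mul_conjTranspose_same S
      rw [hB ρ] at h0
      exact h0
    have htr : Matrix.trace (S * N * S) = 1 := by
      rw [Matrix.trace_mul_cycle]
      have hSS : S * S = (1 : Matrix (Fin dB) (Fin dB) ℂ) ⊗ₖ ρ := by
        simp only [hSdef, ← Matrix.mul_kronecker_mul, Matrix.one_mul]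
        rw [matSqrt_mul_self hρ.1]
      rw [hSS, trace_one_kron_mul, hN.2, Matrix.mul_one, hρ.2]
    have h0 : 0 ≤ vnEnt (S * N * S) := vnEnt_nonneg hX htr
    have h1 : vnEnt ρ ≤ (dR : ℝ) := by
      have := vnEnt_le_card hρ.1
      simpa using this
    have : condEnt ρ N = vnEnt (S * N * S) - vnEnt ρ := rfl
    rw [this]
    linarith
  -- a density matrix exists
  have hρ0 : IsDensity (Matrix.diagonal (fun _ : Fin dR => (((dR : ℝ)⁻¹ : ℝ) : ℂ))) := by
    constructor
    · refine Matrix.PosSemidef.diagonal fun i => ?_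
      have h : (0 : ℝ) ≤ (dR : ℝ)⁻¹ := by positivity
      show (0 : ℂ) ≤ (((dR : ℝ)⁻¹ : ℝ) : ℂ)
      exact_mod_cast h
    · have hdR0 : (dR : ℝ) ≠ 0 := Nat.cast_ne_zero.mpr (by omega)
      rw [Matrix.trace_diagonal, Finset.sum_const, Finset.card_univ, Fintype.card_fin,
        nsmul_eq_mul, ← Complex.ofReal_natCast, ← Complex.ofReal_mul, ← Complex.ofReal_one]
      congr 1
      rw [mul_inv_cancel₀ hdR0]
  -- channel entropy monotonicity
  have hchan : IsChoi T → chanEnt T ≤ chanEnt T' := by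
    intro hT
    have hbddT : BddBelow {x : ℝ | ∃ ρ : Matrix (Fin dR) (Fin dR) ℂ,
        IsDensity ρ ∧ condEnt ρ T = x} := by
      refine ⟨-(dR : ℝ), fun x hx => ?_⟩
      obtain ⟨ρ, hρ, rfl⟩ := hx
      exact hbdd T hT ρ hρ
    refine le_csInf ⟨condEnt _ T', _, hρ0, rfl⟩ ?_
    rintro b ⟨ρ, hρ, rfl⟩
    calc chanEnt T ≤ condEnt ρ T := csInf_le hbddT ⟨ρ, hρ, rfl⟩
      _ ≤ condEnt ρ T' := hent ρ hρ hT
  refine ⟨hchoi, ?_, ?_⟩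
  · intro φ hφ hT hfT hmax
    exact ⟨hfeas hfT, fun N hN hfN => le_trans (hmax N hN hfN) (hent φ hφ hT)⟩
  · intro hT hfT hmax
    exact ⟨hfeas hfT, fun N hN hfN => le_trans (hmax N hN hfN) (hchan hT)⟩

end ThermalPaper
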